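/- arXiv:2305.15784 — 2 statements merged into one kernel-verified Lean document; each statement's English description precedes it below -/
import Mathlib

section
/- Let N be an integer with N ≥ 2. Then N is quasi monomially irreducible if and only if N = p^n for some prime p and integer n ≥ 1, or N = 2^n·3^m for some integers n ≥ 1 and m ≥ 1. -/
open Matrix

/-- The elementary matrix `[[a, -1], [1, 0]]` over `ZMod N`. -/
def genMat {N : ℕ} (a : ZMod N) : Matrix (Fin 2) (Fin 2) (ZMod N) :=
  !![a, -1; 1, 0]

/-- `Mword [a₁, …, aₙ]` is the matrix `Mₙ(a₁, …, aₙ) = genMat aₙ * ⋯ * genMat a₁`. -/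
def Mword {N : ℕ} (l : List (ZMod N)) : Matrix (Fin 2) (Fin 2) (ZMod N) :=
  (l.reverse.map genMat).prod

/-- A tuple (encoded as a list) is a solution of `(E_N)` if its matrix is `±Id`. -/
def IsSolutionE {N : ℕ} (l : List (ZMod N)) : Prop :=
  Mword l = 1 ∨ Mword l = -1

/-- The size of the `k`-monomial minimal solution of `(E_N)`: the least positive `n`
such that the constant `n`-tuple `(k, …, k)` is a solution of `(E_N)`. -/
noncomputable def monomialSize (N : ℕ) (k : ZMod N) : ℕ :=
  sInf {n : ℕ | 0 < n ∧ IsSolutionE (List.replicate n k)}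

/-- The `k`-monomial minimal solution of `(E_N)`. -/
noncomputable def monoSol (N : ℕ) (k : ZMod N) : List (ZMod N) :=
  List.replicate (monomialSize N k) k

/-- The sum `⊕` of two tuples:
`(a₁,…,aₘ) ⊕ (b₁,…,bₗ) = (a₁+bₗ, a₂, …, aₘ₋₁, aₘ+b₁, b₂, …, bₗ₋₁)`. -/
def oplus {N : ℕ} (a b : List (ZMod N)) : List (ZMod N) :=
  (a.headD 0 + b.getLastD 0) ::
    ((a.drop 1).dropLast ++ (a.getLastD 0 + b.headD 0) :: (b.drop 1).dropLast)

/-- Two tuples are equivalent (`∼`) if one is obtained from the other by a cyclic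
permutation, possibly composed with order reversal. -/
def TupEquiv {N : ℕ} (c d : List (ZMod N)) : Prop :=
  (∃ i, d = c.rotate i) ∨ (∃ i, d = c.reverse.rotate i)

/-- A tuple is reducible if it is equivalent to a sum `a ⊕ b` where `b` is a solution of
`(E_N)` and both `a`, `b` have length at least `3`. -/
def IsReducibleE {N : ℕ} (c : List (ZMod N)) : Prop :=
  ∃ a b : List (ZMod N), 3 ≤ a.length ∧ 3 ≤ b.length ∧ IsSolutionE b ∧
    TupEquiv c (oplus a b)

/-- An irreducible solution of `(E_N)`: a solution of size at least `3` that is not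
reducible (the solution `(0,0)` is not considered irreducible). -/
def IsIrreducibleE {N : ℕ} (c : List (ZMod N)) : Prop :=
  IsSolutionE c ∧ 3 ≤ c.length ∧ ¬ IsReducibleE c

/-- A reducible solution of `(E_N)`: a solution that is not irreducible. -/
def IsReducibleSol {N : ℕ} (c : List (ZMod N)) : Prop :=
  IsSolutionE c ∧ ¬ IsIrreducibleE c

/-- `N` is monomially irreducible if for every nonzero `k ∈ ZMod N` the `k`-monomial
minimal solution of `(E_N)` is irreducible. -/
def MonomiallyIrreducible (N : ℕ) : Prop :=
  ∀ k : ZMod N, k ≠ 0 → IsIrreducibleE (monoSol N k)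

/-- `N` is quasi monomially irreducible if for every integer `k` coprime to `N` the
`(k mod N)`-monomial minimal solution of `(E_N)` is irreducible. -/
def QuasiMonomiallyIrreducible (N : ℕ) : Prop :=
  ∀ k : ℤ, Int.gcd k (N : ℤ) = 1 → IsIrreducibleE (monoSol N (k : ZMod N))

/-- `N` is semi monomially irreducible: if `N` is even but not divisible by `4`, this
requires that for every integer `a` coprime to `N/2` the `(2a mod N)`-monomial minimal
solution of `(E_N)` is irreducible; otherwise (i.e. `N` odd or divisible by `4`), it
requires the same for every integer `a` coprime to `N`. -/
def SemiMonomiallyIrreducible (N : ℕ) : Prop :=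
  if 2 ∣ N ∧ ¬ (4 ∣ N) then
    ∀ a : ℤ, Int.gcd a ((N / 2 : ℕ) : ℤ) = 1 →
      IsIrreducibleE (monoSol N ((2 * a : ℤ) : ZMod N))
  else
    ∀ a : ℤ, Int.gcd a (N : ℤ) = 1 →
      IsIrreducibleE (monoSol N ((2 * a : ℤ) : ZMod N))

/-!
With Mathlib's rescaled Chebyshev polynomials `S` (`S (n + 2) = X * S (n + 1) - S n`) one has
`genMat k ^ n = !![S n k, -S (n-1) k; S (n-1) k, -S (n-2) k]`. Hence the size `n` of the
`k`-monomial minimal solution is the least `n > 0` with `S (n-1) k = 0` and `S n k = ±1`, and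
that solution is reducible iff `S j k = ±1` for some `1 ≤ j ≤ n - 3`: a solution
`(x, k, …, k, y)` with `j` inner entries forces `S j k = ±1`, and conversely `(w, k, …, k, w)`
with `w = S j k * S (j-1) k` is one.

If `S (i+1) k = ±1` with `k` a unit, Cassini's identity gives `S i k * S (i+2) k = 0`, while
`S i k + S (i+2) k = ±k` is a unit; so modulo each prime `q ∣ N` exactly one of the two
vanishes. If it is the same one for every `q`, it vanishes in `ZMod N`, and then
`genMat k ^ (i+1)` or `genMat k ^ (i+3)` is `±1`, contradicting minimality. This settles prime
powers. For `N = 2^a 3^b`, every unit `y` of `ZMod 2` or `ZMod 3` has `y^2 = 1`, so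
`S n y = 0 ↔ n % 3 = 2`, which cannot hold for both `i` and `i + 2`.

Otherwise `N = A * p^e` with `p ≥ 5`, `A ≥ 2` and `p ∤ A`. Take `k ≡ 1` mod `A` and `k ≡ 2`
mod `p^e`. Since `S j 2 = j + 1` and `S (3v) 1 = (-1)^v`, the size is `3u` with `p^e ∣ u` and
`(-1)^u = 1` in `ZMod A`, and the Chinese remainder theorem gives `0 < v < u` with
`S (3v) k = -1`.
-/

open Polynomial Polynomial.Chebyshev

section Chebyshev

variable {R R' : Type*} [CommRing R] [CommRing R']

lemma map_S_eval (f : R →+* R') (n : ℤ) (x : R) :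
    f ((S R n).eval x) = (S R' n).eval (f x) := by
  rw [← eval_map_apply, map_S]

lemma S_eval_mul_S_eval_add_two (x : R) (n : ℤ) :
    (S R n).eval x * (S R (n + 2)).eval x = (S R (n + 1)).eval x ^ 2 - 1 := by
  have h := congrArg (eval x) (S_sq_add_S_sq R n)
  simp only [S_add_two, eval_sub, eval_mul, eval_X, eval_add, eval_pow, eval_one] at h ⊢
  linear_combination -h

lemma S_eval_mul_S_eval_add_two_eq_zero {x : R} {n : ℤ}
    (hS : (S R (n + 1)).eval x = 1 ∨ (S R (n + 1)).eval x = -1) :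
    (S R n).eval x * (S R (n + 2)).eval x = 0 := by
  rw [S_eval_mul_S_eval_add_two]
  rcases hS with h | h <;> simp [h]

lemma isUnit_S_eval_add_S_eval_add_two {x : R} (hx : IsUnit x) {n : ℤ}
    (hS : (S R (n + 1)).eval x = 1 ∨ (S R (n + 1)).eval x = -1) :
    IsUnit ((S R n).eval x + (S R (n + 2)).eval x) := by
  rw [S_add_two, eval_sub, eval_mul, eval_X, add_sub_cancel]
  rcases hS with h | h <;> simp [h, hx]

lemma S_eval_add_three {y : R} (hy : y ^ 2 = 1) (n : ℤ) :
    (S R (n + 3)).eval y = -y * (S R n).eval y := by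
  have h2 := S_add_two R (n + 1)
  rw [show n + 1 + 2 = n + 3 by ring, show n + 1 + 1 = n + 2 by ring] at h2
  simp only [h2, S_add_two, eval_sub, eval_mul, eval_X]
  linear_combination (S R (n + 1)).eval y * hy

lemma S_eval_three_mul_add {y : R} (hy : y ^ 2 = 1) (u : ℕ) (r : ℤ) :
    (S R (3 * u + r)).eval y = (-y) ^ u * (S R r).eval y := by
  induction u with
  | zero => simp
  | succ u ih =>
    rw [show (3 * ((u + 1 : ℕ) : ℤ) + r) = 3 * u + r + 3 by push_cast; ring,
      S_eval_add_three hy, ih, pow_succ]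
    ring

lemma S_eval_eq_zero_iff [Nontrivial R] {y : R} (hy : y ^ 2 = 1) (n : ℕ) :
    (S R n).eval y = 0 ↔ n % 3 = 2 := by
  have hunit : IsUnit ((-y) ^ (n / 3)) := (IsUnit.of_mul_eq_one y (by rw [← sq, hy])).neg.pow _
  have hn : (n : ℤ) = 3 * ((n / 3 : ℕ) : ℤ) + ((n % 3 : ℕ) : ℤ) := by
    exact_mod_cast (Nat.div_add_mod n 3).symm
  rw [hn, S_eval_three_mul_add hy, hunit.mul_right_eq_zero]
  have hy0 : y ≠ 0 := by rintro rfl; simp at hy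
  have : n % 3 < 3 := Nat.mod_lt _ (by norm_num)
  interval_cases n % 3 <;> simp [S_two, hy, hy0]

end Chebyshev

lemma Nat.Prime.eq_two_or_eq_three_of_dvd_two_pow_mul_three_pow {q a b : ℕ} (hq : q.Prime)
    (h : q ∣ 2 ^ a * 3 ^ b) : q = 2 ∨ q = 3 := by
  rcases hq.dvd_mul.1 h with h | h
  · exact Or.inl ((Nat.prime_dvd_prime_iff_eq hq Nat.prime_two).1 (hq.dvd_of_dvd_pow h))
  · exact Or.inr ((Nat.prime_dvd_prime_iff_eq hq Nat.prime_three).1 (hq.dvd_of_dvd_pow h))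

lemma List.exists_eq_cons_append_singleton {α : Type*} {l : List α} (h : 2 ≤ l.length) :
    ∃ x m y, l = x :: (m ++ [y]) := by
  match l, h with
  | x :: z :: t, _ => exact ⟨x, (z :: t).dropLast, (z :: t).getLast (List.cons_ne_nil _ _),
      by rw [List.dropLast_append_getLast]⟩

namespace ZMod

variable {N : ℕ}

lemma isUnit_intCast_of_gcd_eq_one {k : ℤ} (h : Int.gcd k N = 1) : IsUnit (k : ZMod N) := by
  obtain ⟨a, b, hab⟩ := Int.isCoprime_iff_gcd_eq_one.2 h
  have hcast := congrArg (Int.cast : ℤ → ZMod N) hab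
  push_cast [ZMod.natCast_self, mul_zero, add_zero] at hcast
  exact IsUnit.of_mul_eq_one (a : ZMod N) (by rw [mul_comm, hcast])

lemma isUnit_of_forall_castHom_ne_zero [NeZero N] {x : ZMod N}
    (h : ∀ q (hq : q ∣ N), q.Prime → castHom hq (ZMod q) x ≠ 0) : IsUnit x := by
  rw [← natCast_zmod_val x, isUnit_iff_coprime]
  refine Nat.coprime_of_dvd fun q hq hqx hqN => h q hqN hq ?_
  rw [← natCast_zmod_val x, map_natCast, natCast_eq_zero_iff]
  exact hqx

lemma eq_zero_of_forall_castHom_eq_zero [NeZero N] {c d : ZMod N} (hcd : c * d = 0)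
    (hu : IsUnit (c + d)) (hc : ∀ q (hq : q ∣ N), q.Prime → castHom hq (ZMod q) c = 0) :
    c = 0 := by
  have hd : IsUnit d := isUnit_of_forall_castHom_ne_zero fun q hq hqp => by
    have := Fact.mk hqp
    have hne := (hu.map (castHom hq (ZMod q))).ne_zero
    rwa [map_add, hc q hq hqp, zero_add] at hne
  exact hd.mul_left_eq_zero.1 hcd

lemma sq_eq_one_of_ne_zero {q : ℕ} (hq : q = 2 ∨ q = 3) {y : ZMod q} (hy : y ≠ 0) :
    y ^ 2 = 1 := by
  rcases hq with rfl | rfl <;> revert y <;> decide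

lemma two_ne_zero_of_two_lt (hN : 2 < N) : (2 : ZMod N) ≠ 0 := fun h =>
  absurd (Nat.le_of_dvd two_pos ((natCast_eq_zero_iff 2 N).1 (by exact_mod_cast h))) (by omega)

end ZMod

section Matrices

variable {N : ℕ}

lemma genMat_pow (k : ZMod N) (n : ℕ) :
    genMat k ^ n = !![(S (ZMod N) n).eval k, -(S (ZMod N) (n - 1)).eval k;
      (S (ZMod N) (n - 1)).eval k, -(S (ZMod N) (n - 2)).eval k] := by
  induction n with
  | zero => simp [Matrix.one_fin_two]
  | succ n ih =>
    have h1 := S_add_one (ZMod N) n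
    have h2 := S_sub_one (ZMod N) (n - 1)
    rw [show (n : ℤ) - 1 - 1 = n - 2 by ring, sub_add_cancel] at h2
    rw [pow_succ, ih, genMat, Matrix.mul_fin_two]
    push_cast
    simp only [h1, h2, add_sub_cancel_right, eval_sub, eval_mul, eval_X]
    rw [show (n : ℤ) + 1 - 2 = n - 1 by ring]
    ext i j
    fin_cases i <;> fin_cases j <;> simp <;> ring

lemma genMat_pow_eq_smul_one_iff (k ε : ZMod N) (n : ℕ) :
    genMat k ^ n = ε • 1 ↔
      (S (ZMod N) (n - 1)).eval k = 0 ∧ (S (ZMod N) n).eval k = ε := by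
  have h := S_sub_two (ZMod N) n
  rw [genMat_pow, Matrix.smul_one_eq_diagonal, Matrix.diagonal_fin_two]
  constructor
  · intro h
    exact ⟨by simpa using congrFun (congrFun h 1) 0, by simpa using congrFun (congrFun h 0) 0⟩
  · rintro ⟨h0, h1⟩
    rw [h, eval_sub, eval_mul, eval_X, h0, h1]
    simp

lemma genMat_pow_eq_one_or_neg_one_iff (k : ZMod N) (n : ℕ) :
    (genMat k ^ n = 1 ∨ genMat k ^ n = -1) ↔ (S (ZMod N) (n - 1)).eval k = 0 ∧
      ((S (ZMod N) n).eval k = 1 ∨ (S (ZMod N) n).eval k = -1) := by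
  simpa [and_or_left] using
    or_congr (genMat_pow_eq_smul_one_iff k 1 n) (genMat_pow_eq_smul_one_iff k (-1) n)

lemma genMat_mul_mul_genMat (x y : ZMod N) (P : Matrix (Fin 2) (Fin 2) (ZMod N)) :
    genMat y * P * genMat x =
      !![y * (P 0 0 * x + P 0 1) - (P 1 0 * x + P 1 1), P 1 0 - y * P 0 0;
        P 0 0 * x + P 0 1, -P 0 0] := by
  ext i j
  fin_cases i <;> fin_cases j <;>
    simp [genMat, Matrix.mul_apply, Matrix.vecMul, dotProduct, Fin.sum_univ_two] <;> ring

lemma genMat_mul_genMat_pow_mul_genMat {k η : ZMod N} {j : ℕ}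
    (hη : (S (ZMod N) j).eval k = η) (hη2 : η ^ 2 = 1) :
    genMat (η * (S (ZMod N) (j - 1)).eval k) * genMat k ^ j *
      genMat (η * (S (ZMod N) (j - 1)).eval k) = -η • 1 := by
  have hcas := S_eval_mul_S_eval_add_two k ((j : ℤ) - 2)
  rw [show (j : ℤ) - 2 + 2 = j by ring, show (j : ℤ) - 2 + 1 = j - 1 by ring, hη] at hcas
  rw [genMat_mul_mul_genMat, genMat_pow, hη]
  set c := (S (ZMod N) (j - 1)).eval k
  set d := (S (ZMod N) (j - 2)).eval k
  ext a b
  fin_cases a <;> fin_cases b <;> simp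
  · linear_combination (η * c ^ 2 - d) * hη2 + η * hcas
  · linear_combination -c * hη2
  · linear_combination c * hη2

lemma Mword_replicate (k : ZMod N) (n : ℕ) : Mword (List.replicate n k) = genMat k ^ n := by
  simp [Mword, List.reverse_replicate, List.map_replicate, List.prod_replicate]

lemma Mword_cons_append_singleton (x y : ZMod N) (m : List (ZMod N)) :
    Mword (x :: (m ++ [y])) = genMat y * Mword m * genMat x := by
  simp [Mword, List.prod_append, mul_assoc]

lemma isSolutionE_replicate_iff (k : ZMod N) (n : ℕ) :
    IsSolutionE (List.replicate n k) ↔ genMat k ^ n = 1 ∨ genMat k ^ n = -1 := by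
  rw [IsSolutionE, Mword_replicate]

end Matrices

section MonomialSize

variable {N : ℕ}

lemma exists_genMat_pow_eq_one [NeZero N] (k : ZMod N) : ∃ n, 0 < n ∧ genMat k ^ n = 1 := by
  have hdet : (genMat k).det = 1 := by simp [genMat, Matrix.det_fin_two_of]
  obtain ⟨u, hu⟩ := (Matrix.isUnit_iff_isUnit_det _).2 (hdet ▸ isUnit_one)
  exact ⟨orderOf u, orderOf_pos u, by
    rw [← hu, ← Units.val_pow_eq_pow_val, pow_orderOf_eq_one, Units.val_one]⟩

lemma monomialSize_spec [NeZero N] (k : ZMod N) :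
    0 < monomialSize N k ∧
      (genMat k ^ monomialSize N k = 1 ∨ genMat k ^ monomialSize N k = -1) := by
  obtain ⟨n, hn, h⟩ := exists_genMat_pow_eq_one k
  have hmem := Nat.sInf_mem (s := {n | 0 < n ∧ IsSolutionE (List.replicate n k)})
    ⟨n, hn, (isSolutionE_replicate_iff k n).2 (Or.inl h)⟩
  rw [Set.mem_ofPred_eq, isSolutionE_replicate_iff] at hmem
  exact hmem

lemma not_genMat_pow_of_lt_monomialSize {k : ZMod N} {r : ℕ} (hr : 0 < r)
    (hrn : r < monomialSize N k) : ¬(genMat k ^ r = 1 ∨ genMat k ^ r = -1) := by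
  rw [← isSolutionE_replicate_iff]
  exact fun h => Nat.notMem_of_lt_sInf hrn ⟨hr, h⟩

lemma three_le_monomialSize [NeZero N] [Nontrivial (ZMod N)] {k : ZMod N} (hk : k ≠ 0) :
    3 ≤ monomialSize N k := by
  obtain ⟨hpos, hsol⟩ := monomialSize_spec k
  have hS := ((genMat_pow_eq_one_or_neg_one_iff k _).1 hsol).1
  by_contra! h
  interval_cases monomialSize N k <;> simp_all

end MonomialSize

section Reducibility

variable {N : ℕ}

lemma tupEquiv_replicate_iff (k : ZMod N) (n : ℕ) (d : List (ZMod N)) :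
    TupEquiv (List.replicate n k) d ↔ d = List.replicate n k := by
  refine ⟨?_, fun h => Or.inl ⟨0, by rw [h, List.rotate_zero]⟩⟩
  rintro (⟨i, rfl⟩ | ⟨i, rfl⟩) <;> simp [List.rotate_replicate]

lemma oplus_cons_append_singleton (x y x' y' : ZMod N) (m m' : List (ZMod N)) :
    oplus (x' :: (m' ++ [y'])) (x :: (m ++ [y])) = (x' + y) :: (m' ++ (y' + x) :: m) := by
  have hlast : ∀ (u v : ZMod N) l, (u :: (l ++ [v])).getLastD 0 = v := fun u v l => by
    rw [← List.cons_append, List.getLastD_concat]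
  rw [oplus, hlast, hlast]
  simp

lemma exists_S_eval_of_isReducibleE {k : ZMod N} (hred : IsReducibleE (monoSol N k)) :
    ∃ j, 1 ≤ j ∧ j + 3 ≤ monomialSize N k ∧
      ((S (ZMod N) j).eval k = 1 ∨ (S (ZMod N) j).eval k = -1) := by
  obtain ⟨a, b, ha, hb, hsol, hequiv⟩ := hred
  obtain ⟨x', m', y', rfl⟩ := List.exists_eq_cons_append_singleton (by omega : 2 ≤ a.length)
  obtain ⟨x, m, y, rfl⟩ := List.exists_eq_cons_append_singleton (by omega : 2 ≤ b.length)
  rw [monoSol, tupEquiv_replicate_iff, oplus_cons_append_singleton, List.eq_replicate_iff]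
    at hequiv
  obtain ⟨hlen, hk⟩ := hequiv
  obtain ⟨j, rfl⟩ : ∃ j, m = List.replicate j k :=
    ⟨_, List.eq_replicate_iff.2 ⟨rfl, by simp_all⟩⟩
  simp only [List.length_cons, List.length_append, List.length_replicate, List.length_nil]
    at ha hb hlen
  refine ⟨j, by omega, by omega, ?_⟩
  have hentry : Mword (x :: (List.replicate j k ++ [y])) 1 1 = -(S (ZMod N) j).eval k := by
    rw [Mword_cons_append_singleton, Mword_replicate, genMat_mul_mul_genMat, genMat_pow]
    simp
  rcases hsol with h | h <;> rw [h] at hentry <;> simp at hentry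
  · exact Or.inr (neg_eq_iff_eq_neg.1 hentry.symm)
  · exact Or.inl hentry.symm

lemma isReducibleE_monoSol_of_S_eval {k : ZMod N} {j : ℕ} (hj : 1 ≤ j)
    (hjn : j + 3 ≤ monomialSize N k)
    (hS : (S (ZMod N) j).eval k = 1 ∨ (S (ZMod N) j).eval k = -1) :
    IsReducibleE (monoSol N k) := by
  have hη2 : ((S (ZMod N) j).eval k) ^ 2 = 1 := by rcases hS with h | h <;> simp [h]
  -- the off-diagonal entries of `genMat w * genMat k ^ j * genMat w = ±1` force this `w`
  set w := (S (ZMod N) j).eval k * (S (ZMod N) (j - 1)).eval k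
  refine ⟨(k - w) :: (List.replicate (monomialSize N k - j - 2) k ++ [k - w]),
    w :: (List.replicate j k ++ [w]), by simp; omega, by simp; omega, ?_, ?_⟩
  · rw [IsSolutionE, Mword_cons_append_singleton, Mword_replicate,
      genMat_mul_genMat_pow_mul_genMat rfl hη2]
    rcases hS with h | h <;> simp [h]
  · rw [monoSol, tupEquiv_replicate_iff, oplus_cons_append_singleton, sub_add_cancel,
      List.eq_replicate_iff]
    constructor
    · simp
      omega
    · simp only [List.mem_cons, List.mem_append, List.mem_replicate]
      tauto

lemma isReducibleE_monoSol_iff (k : ZMod N) :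
    IsReducibleE (monoSol N k) ↔ ∃ j, 1 ≤ j ∧ j + 3 ≤ monomialSize N k ∧
      ((S (ZMod N) j).eval k = 1 ∨ (S (ZMod N) j).eval k = -1) :=
  ⟨exists_S_eval_of_isReducibleE, fun ⟨_, hj, hjn, hS⟩ => isReducibleE_monoSol_of_S_eval hj hjn hS⟩

lemma isIrreducibleE_monoSol_iff [NeZero N] [Nontrivial (ZMod N)] {k : ZMod N} (hk : k ≠ 0) :
    IsIrreducibleE (monoSol N k) ↔ ∀ j, 1 ≤ j → j + 3 ≤ monomialSize N k →
      ¬((S (ZMod N) j).eval k = 1 ∨ (S (ZMod N) j).eval k = -1) := by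
  have hsol : IsSolutionE (monoSol N k) :=
    (isSolutionE_replicate_iff _ _).2 (monomialSize_spec k).2
  have hlen : 3 ≤ (monoSol N k).length := by
    rw [monoSol, List.length_replicate]
    exact three_le_monomialSize hk
  simp only [IsIrreducibleE, isReducibleE_monoSol_iff, hsol, hlen, true_and, not_exists, not_and]

lemma quasiMonomiallyIrreducible_iff [NeZero N] :
    QuasiMonomiallyIrreducible N ↔ ∀ k : ZMod N, IsUnit k → IsIrreducibleE (monoSol N k) := by
  refine ⟨fun h k hk => ?_, fun h k hk => h k (ZMod.isUnit_intCast_of_gcd_eq_one hk)⟩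
  have hcop : Nat.Coprime k.val N := by
    rwa [← ZMod.isUnit_iff_coprime, ZMod.natCast_zmod_val]
  simpa using h k.val (by rwa [Int.gcd_natCast_natCast])

end Reducibility

section Irreducible

variable {N : ℕ}

lemma isIrreducibleE_monoSol_of_S_eval_eq_zero [NeZero N] [Nontrivial (ZMod N)] {k : ZMod N}
    (hk : k ≠ 0) (h : ∀ i : ℕ,
      ((S (ZMod N) (i + 1)).eval k = 1 ∨ (S (ZMod N) (i + 1)).eval k = -1) →
        (S (ZMod N) i).eval k = 0 ∨ (S (ZMod N) (i + 2)).eval k = 0) :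
    IsIrreducibleE (monoSol N k) := by
  rw [isIrreducibleE_monoSol_iff hk]
  intro j hj hjn hS
  obtain ⟨i, rfl⟩ : ∃ i, j = i + 1 := ⟨j - 1, by omega⟩
  push_cast at hS
  rcases h i hS with h0 | h0
  · refine not_genMat_pow_of_lt_monomialSize (r := i + 1) (by omega) (by omega)
      ((genMat_pow_eq_one_or_neg_one_iff k _).2 ?_)
    push_cast
    simpa [h0] using hS
  · have h3 := S_add_two (ZMod N) (i + 1)
    rw [show (i : ℤ) + 1 + 2 = i + 3 by ring, show (i : ℤ) + 1 + 1 = i + 2 by ring] at h3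
    refine not_genMat_pow_of_lt_monomialSize (r := i + 3) (by omega) (by omega)
      ((genMat_pow_eq_one_or_neg_one_iff k _).2 ?_)
    push_cast
    rw [show (i : ℤ) + 3 - 1 = i + 2 by ring, h3, eval_sub, eval_mul, h0]
    rcases hS with h | h <;> simp [h]

lemma isIrreducibleE_monoSol_prime_pow {p e : ℕ} (hp : p.Prime) (he : 1 ≤ e)
    {k : ZMod (p ^ e)} (hk : IsUnit k) : IsIrreducibleE (monoSol (p ^ e) k) := by
  have : Fact p.Prime := ⟨hp⟩
  have : Fact (1 < p ^ e) := ⟨Nat.one_lt_pow (by omega) hp.one_lt⟩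
  have hprime : ∀ q, q ∣ p ^ e → q.Prime → q = p := fun q hq hqp =>
    (Nat.prime_dvd_prime_iff_eq hqp hp).1 (hqp.dvd_of_dvd_pow hq)
  have hpe : p ∣ p ^ e := dvd_pow_self p (by omega)
  refine isIrreducibleE_monoSol_of_S_eval_eq_zero hk.ne_zero fun i hS => ?_
  have hcd := S_eval_mul_S_eval_add_two_eq_zero hS
  have hu := isUnit_S_eval_add_S_eval_add_two hk hS
  have hcd_p : ZMod.castHom hpe (ZMod p) ((S _ i).eval k) *
      ZMod.castHom hpe (ZMod p) ((S _ (i + 2)).eval k) = 0 := by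
    rw [← map_mul, hcd, map_zero]
  rcases mul_eq_zero.1 hcd_p with h | h
  · refine Or.inl (ZMod.eq_zero_of_forall_castHom_eq_zero hcd hu fun q hq hqp => ?_)
    obtain rfl := hprime q hq hqp
    exact h
  · refine Or.inr (ZMod.eq_zero_of_forall_castHom_eq_zero (by rwa [mul_comm])
      (by rwa [add_comm]) fun q hq hqp => ?_)
    obtain rfl := hprime q hq hqp
    exact h

lemma isIrreducibleE_monoSol_of_forall_prime_dvd [NeZero N] [Nontrivial (ZMod N)]
    (h23 : ∀ q, q.Prime → q ∣ N → q = 2 ∨ q = 3) {k : ZMod N} (hk : IsUnit k) :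
    IsIrreducibleE (monoSol N k) := by
  refine isIrreducibleE_monoSol_of_S_eval_eq_zero hk.ne_zero fun i hS => ?_
  have hcd := S_eval_mul_S_eval_add_two_eq_zero hS
  have hu := isUnit_S_eval_add_S_eval_add_two hk hS
  have hmod3 : ∀ q (hq : q ∣ N), q.Prime → ∀ r : ℕ,
      ZMod.castHom hq (ZMod q) ((S _ r).eval k) = 0 → r % 3 = 2 := by
    intro q hq hqp r hr
    have := Fact.mk hqp
    rw [map_S_eval] at hr
    exact (S_eval_eq_zero_iff (ZMod.sq_eq_one_of_ne_zero (h23 q hqp hq) (hk.map _).ne_zero) r).1 hr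
  have hfield : ∀ q (hq : q ∣ N), q.Prime → ZMod.castHom hq (ZMod q) ((S _ i).eval k) = 0 ∨
      ZMod.castHom hq (ZMod q) ((S _ (i + 2)).eval k) = 0 := fun q hq hqp => by
    have := Fact.mk hqp
    rw [← mul_eq_zero, ← map_mul, hcd, map_zero]
  by_contra! hne
  obtain ⟨q, hq, hqp, hc⟩ : ∃ q, ∃ hq : q ∣ N, q.Prime ∧
      ZMod.castHom hq (ZMod q) ((S _ i).eval k) ≠ 0 := by
    by_contra! h
    exact hne.1 (ZMod.eq_zero_of_forall_castHom_eq_zero hcd hu h)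
  obtain ⟨q', hq', hqp', hd⟩ : ∃ q, ∃ hq : q ∣ N, q.Prime ∧
      ZMod.castHom hq (ZMod q) ((S _ (i + 2)).eval k) ≠ 0 := by
    by_contra! h
    exact hne.2 (ZMod.eq_zero_of_forall_castHom_eq_zero (by rwa [mul_comm]) (by rwa [add_comm]) h)
  have hi := hmod3 q' hq' hqp' i ((hfield q' hq' hqp').resolve_right hd)
  have hi2 := hmod3 q hq hqp (i + 2) (by exact_mod_cast (hfield q hq hqp).resolve_left hc)
  omega

end Irreducible

section Reducible

lemma exists_pos_lt_dvd_three_mul_add_two {B : ℕ} (hB : 2 < B) (h3 : Nat.Coprime 3 B) :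
    ∃ v, 0 < v ∧ v < B ∧ B ∣ 3 * v + 2 := by
  have : NeZero B := ⟨by omega⟩
  set v := ((-2) * (3 : ZMod B)⁻¹).val
  have hv : ((3 * v + 2 : ℕ) : ZMod B) = 0 := by
    have h33 := ZMod.coe_mul_inv_eq_one 3 h3
    push_cast at h33 ⊢
    rw [ZMod.natCast_zmod_val]
    linear_combination (-2 : ZMod B) * h33
  refine ⟨v, Nat.pos_of_ne_zero fun h0 => ZMod.two_ne_zero_of_two_lt hB ?_, ZMod.val_lt _,
    (ZMod.natCast_eq_zero_iff _ _).1 hv⟩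
  simpa [h0] using hv

lemma exists_pos_lt_dvd_three_mul_add_two_neg_one_pow {A B u : ℕ} (hB : 2 < B)
    (h6 : Nat.Coprime 6 B) (hu : 0 < u) (hBu : B ∣ u) (hsign : (-1 : ZMod A) ^ u = 1) :
    ∃ v, 0 < v ∧ v < u ∧ B ∣ 3 * v + 2 ∧ (-1 : ZMod A) ^ v = -1 := by
  obtain ⟨v, hv0, hvB, hvdvd⟩ := exists_pos_lt_dvd_three_mul_add_two hB
    (Nat.Coprime.coprime_dvd_left (by norm_num) h6)
  have hBle : B ≤ u := Nat.le_of_dvd hu hBu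
  by_cases h1 : (-1 : ZMod A) = 1
  · exact ⟨v, hv0, by omega, hvdvd, by rw [h1, one_pow]⟩
  have h2B : Nat.Coprime 2 B := Nat.Coprime.coprime_dvd_left (by norm_num) h6
  have hu2 : 2 ∣ u := by
    rcases Nat.even_or_odd u with he | ho
    · exact even_iff_two_dvd.1 he
    · exact absurd (ho.neg_one_pow.symm.trans hsign) h1
  have h2Bu : 2 * B ≤ u := Nat.le_of_dvd hu (h2B.mul_dvd_of_dvd_of_dvd hu2 hBu)
  rcases Nat.even_or_odd v with hve | hvo
  · refine ⟨v + B, by omega, by omega, ?_, (hve.add_odd (Nat.coprime_two_left.1 h2B)).neg_one_pow⟩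
    rw [show 3 * (v + B) + 2 = 3 * v + 2 + 3 * B by ring]
    exact hvdvd.add (dvd_mul_left B 3)
  · exact ⟨v, hv0, by omega, hvdvd, hvo.neg_one_pow⟩

lemma monomialSize_eq_three_mul {N A B : ℕ} [NeZero N] [Nontrivial (ZMod A)]
    (φA : ZMod N →+* ZMod A) (φB : ZMod N →+* ZMod B) (hB : 2 < B) (h3 : Nat.Coprime 3 B)
    {k : ZMod N} (hkA : φA k = 1) (hkB : φB k = 2) :
    ∃ u, monomialSize N k = 3 * u ∧ B ∣ u ∧ (-1 : ZMod A) ^ u = 1 := by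
  obtain ⟨hpos, hsol⟩ := monomialSize_spec k
  obtain ⟨m, hm⟩ : ∃ m, monomialSize N k = m + 1 := ⟨_, (Nat.succ_pred_eq_of_pos hpos).symm⟩
  rw [genMat_pow_eq_one_or_neg_one_iff, hm, Nat.cast_succ, add_sub_cancel_right] at hsol
  obtain ⟨hzero, hsign⟩ := hsol
  have hBm : B ∣ m + 1 := by
    have := congrArg φB hzero
    rw [map_S_eval, hkB, S_eval_two, map_zero] at this
    exact (ZMod.natCast_eq_zero_iff _ _).1 (by exact_mod_cast this)
  have h3m : m % 3 = 2 := by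
    have := congrArg φA hzero
    rw [map_S_eval, hkA, map_zero] at this
    exact (S_eval_eq_zero_iff (one_pow 2) m).1 this
  have hone : (S (ZMod N) ((m : ℤ) + 1)).eval k = 1 := by
    refine hsign.resolve_right fun h => ?_
    have := congrArg φB h
    rw [map_S_eval, hkB, S_eval_two, map_neg, map_one] at this
    have h0 : ((m + 1 : ℕ) : ZMod B) = 0 := (ZMod.natCast_eq_zero_iff _ _).2 hBm
    push_cast at this h0
    exact ZMod.two_ne_zero_of_two_lt hB (by linear_combination this - h0)
  obtain ⟨u, hu⟩ : 3 ∣ m + 1 := by omega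
  refine ⟨u, by omega, h3.symm.dvd_of_dvd_mul_left (hu ▸ hBm), ?_⟩
  have := congrArg φA hone
  rw [map_S_eval, hkA, map_one, show (m : ℤ) + 1 = 3 * (u : ℤ) + 0 by exact_mod_cast hu,
    S_eval_three_mul_add (one_pow 2)] at this
  simpa using this

lemma not_quasiMonomiallyIrreducible_mul {A B : ℕ} (hAB : A.Coprime B) (hA : 2 ≤ A)
    (hB : 1 < B) (h6 : Nat.Coprime 6 B) : ¬ QuasiMonomiallyIrreducible (A * B) := by
  have hB2 : 2 < B := by
    by_contra! h
    obtain rfl : B = 2 := by omega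
    norm_num at h6
  have : NeZero (A * B) := ⟨by positivity⟩
  have : Fact (1 < A) := ⟨hA⟩
  have : Fact (1 < A * B) := ⟨by nlinarith⟩
  set e := ZMod.chineseRemainder hAB
  set φA := (RingHom.fst (ZMod A) (ZMod B)).comp e.toRingHom
  set φB := (RingHom.snd (ZMod A) (ZMod B)).comp e.toRingHom
  set k := e.symm (1, 2)
  have hkA : φA k = 1 := by simp [φA, k]
  have hkB : φB k = 2 := by simp [φB, k]
  have hk : IsUnit k := by
    have h2 : IsUnit (2 : ZMod B) := by
      exact_mod_cast (ZMod.isUnit_iff_coprime 2 B).2 (Nat.Coprime.coprime_dvd_left (by norm_num) h6)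
    exact (Prod.isUnit_iff.2 ⟨isUnit_one, h2⟩).map e.symm
  intro hqmi
  have hirr :=
    (isIrreducibleE_monoSol_iff hk.ne_zero).1 (quasiMonomiallyIrreducible_iff.1 hqmi k hk)
  obtain ⟨u, hn, hBu, hsign⟩ := monomialSize_eq_three_mul φA φB hB2
    (Nat.Coprime.coprime_dvd_left (by norm_num) h6) hkA hkB
  obtain ⟨v, hv0, hvu, hvB, hvA⟩ := exists_pos_lt_dvd_three_mul_add_two_neg_one_pow hB2 h6
    (by have := (monomialSize_spec k).1; omega) hBu hsign
  refine hirr (3 * v) (by omega) (by omega) (Or.inr (e.injective (Prod.ext ?_ ?_)))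
  · change φA _ = φA _
    rw [map_S_eval, hkA, map_neg, map_one, Nat.cast_mul, Nat.cast_ofNat,
      ← add_zero (3 * (v : ℤ)), S_eval_three_mul_add (one_pow 2), hvA]
    simp
  · change φB _ = φB _
    rw [map_S_eval, hkB, S_eval_two, map_neg, map_one]
    have := (ZMod.natCast_eq_zero_iff _ _).2 hvB
    push_cast at this ⊢
    linear_combination this

end Reducible

section Classification

variable {N : ℕ}

lemma quasiMonomiallyIrreducible_prime_pow {p e : ℕ} (hp : p.Prime) (he : 1 ≤ e) :
    QuasiMonomiallyIrreducible (p ^ e) := by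
  have : NeZero (p ^ e) := ⟨pow_ne_zero _ hp.ne_zero⟩
  exact quasiMonomiallyIrreducible_iff.2 fun _ hk => isIrreducibleE_monoSol_prime_pow hp he hk

lemma quasiMonomiallyIrreducible_of_forall_prime_dvd (hN : 2 ≤ N)
    (h23 : ∀ q, q.Prime → q ∣ N → q = 2 ∨ q = 3) : QuasiMonomiallyIrreducible N := by
  have : Fact (1 < N) := ⟨hN⟩
  have : NeZero N := ⟨by omega⟩
  exact quasiMonomiallyIrreducible_iff.2 fun _ hk =>
    isIrreducibleE_monoSol_of_forall_prime_dvd h23 hk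

lemma not_quasiMonomiallyIrreducible_of_prime_dvd {p : ℕ} (hN : N ≠ 0) (hp : p.Prime)
    (hpN : p ∣ N) (hp2 : p ≠ 2) (hp3 : p ≠ 3) (hNp : ∀ e, N ≠ p ^ e) :
    ¬ QuasiMonomiallyIrreducible N := by
  have hp6 : Nat.Coprime p 6 := hp.coprime_iff_not_dvd.2 fun h =>
    (hp.eq_two_or_eq_three_of_dvd_two_pow_mul_three_pow (a := 1) (b := 1) h).elim hp2 hp3
  have hA0 : ordCompl[p] N ≠ 0 := (Nat.ordCompl_pos p hN).ne'
  have hA1 : ordCompl[p] N ≠ 1 := fun h => hNp _ <| by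
    rw [← Nat.ordProj_mul_ordCompl_eq_self N p, h, mul_one]
  rw [← Nat.ordProj_mul_ordCompl_eq_self N p, mul_comm]
  exact not_quasiMonomiallyIrreducible_mul ((Nat.coprime_ordCompl hp hN).pow_left _).symm
    ((Nat.two_le_iff _).2 ⟨hA0, hA1⟩)
    (Nat.one_lt_pow (hp.factorization_pos_of_dvd hN hpN).ne' hp.one_lt) (hp6.symm.pow_right _)

lemma exists_eq_prime_pow_or_eq_two_pow_mul_three_pow (hN : 2 ≤ N)
    (h23 : ∀ q, q.Prime → q ∣ N → q = 2 ∨ q = 3) :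
    (∃ p n : ℕ, p.Prime ∧ 1 ≤ n ∧ N = p ^ n) ∨
      (∃ n m : ℕ, 1 ≤ n ∧ 1 ≤ m ∧ N = 2 ^ n * 3 ^ m) := by
  have hN0 : N ≠ 0 := by omega
  have hfac : N = 2 ^ N.factorization 2 * 3 ^ N.factorization 3 := by
    nth_rewrite 1 [← Nat.prod_factorization_pow_eq_self hN0]
    rw [Finsupp.prod_of_support_subset _ (s := {2, 3}) ?_ _ (by simp),
      Finset.prod_pair (by norm_num)]
    intro q hq
    rw [Nat.support_factorization] at hq
    simpa using h23 q (Nat.prime_of_mem_primeFactors hq) (Nat.dvd_of_mem_primeFactors hq)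
  rcases Nat.eq_zero_or_pos (N.factorization 2) with h2 | h2
  · refine Or.inl ⟨3, _, Nat.prime_three, Nat.pos_of_ne_zero fun h3 => ?_,
      hfac.trans (by rw [h2, pow_zero, one_mul])⟩
    rw [h2, h3] at hfac
    omega
  rcases Nat.eq_zero_or_pos (N.factorization 3) with h3 | h3
  · exact Or.inl ⟨2, _, Nat.prime_two, h2, hfac.trans (by rw [h3, pow_zero, mul_one])⟩
  · exact Or.inr ⟨_, _, h2, h3, hfac⟩

end Classification

/-- `N ≥ 2` is quasi monomially irreducible iff `N = p^n` for a prime `p`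
and `n ≥ 1`, or `N = 2^n * 3^m` with `n, m ≥ 1`. -/
theorem stmt_1 (N : ℕ) (hN : 2 ≤ N) :
    QuasiMonomiallyIrreducible N ↔
      ((∃ p n : ℕ, p.Prime ∧ 1 ≤ n ∧ N = p ^ n) ∨
        (∃ n m : ℕ, 1 ≤ n ∧ 1 ≤ m ∧ N = 2 ^ n * 3 ^ m)) := by
  constructor
  · intro hqmi
    by_contra hform
    by_cases h23 : ∀ q, q.Prime → q ∣ N → q = 2 ∨ q = 3
    · exact hform (exists_eq_prime_pow_or_eq_two_pow_mul_three_pow hN h23)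
    push Not at h23
    obtain ⟨p, hp, hpN, hp2, hp3⟩ := h23
    refine not_quasiMonomiallyIrreducible_of_prime_dvd (by omega) hp hpN hp2 hp3
      (fun e he => hform (Or.inl ⟨p, e, hp, Nat.pos_of_ne_zero fun he0 => ?_, he⟩)) hqmi
    rw [he, he0, pow_zero] at hN
    omega
  · rintro (⟨p, e, hp, he, rfl⟩ | ⟨n, m, -, -, rfl⟩)
    · exact quasiMonomiallyIrreducible_prime_pow hp he
    · exact quasiMonomiallyIrreducible_of_forall_prime_dvd hN fun q hq hqN =>
        hq.eq_two_or_eq_three_of_dvd_two_pow_mul_three_pow hqN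
end

section
/- Let N ≥ 3. The 2-monomial minimal solution of (E_N) (that is, the constant tuple with all entries equal to 2 mod N of minimal size) is irreducible, has size N, and satisfies M_N(2, …, 2) = Id over Z/NZ. -/
/-!
Write `genMat 2 = 1 + E` with `E = !![1, -1; 1, -1]`; since `E ^ 2 = 0`,
`M_n(2, …, 2) = 1 + n • E`. This is `±1` exactly when `N ∣ n` (`-1` would force `2 = 0`),
which gives the size `N` and `M_N(2, …, 2) = 1`. If `(2, …, 2) ∼ a ⊕ b`, the inner entries
of `b` survive in the sum, so `b = (x, 2, …, 2, y)` with `m` inner twos, `0 < m < N - 2`;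
but the `(1, 1)` entry of `M(b)` is `-(1 + m)`, which is not `±1`.
-/

open Matrix

namespace Mword

variable {N : ℕ}

lemma replicate (n : ℕ) (a : ZMod N) : Mword (List.replicate n a) = genMat a ^ n := by
  simp [Mword]

lemma cons_append_singleton_one_one (x y : ZMod N) (l : List (ZMod N)) :
    Mword (x :: (l ++ [y])) 1 1 = -Mword l 0 0 := by
  simp [Mword, genMat, Matrix.mul_apply, Fin.sum_univ_two]

end Mword

lemma ZMod.natCast_ne_zero_of_pos_of_lt {N k : ℕ} (hk : 0 < k) (hkN : k < N) :
    (k : ZMod N) ≠ 0 := by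
  rw [Ne, ZMod.natCast_eq_zero_iff]
  exact fun hdvd => absurd (Nat.le_of_dvd hk hdvd) (by omega)

lemma length_oplus {N : ℕ} {a b : List (ZMod N)} (ha : 2 ≤ a.length) (hb : 2 ≤ b.length) :
    (oplus a b).length = a.length + b.length - 2 := by
  simp [oplus]
  omega

lemma TupEquiv.eq_replicate {N n : ℕ} {k : ZMod N} {d : List (ZMod N)}
    (h : TupEquiv (List.replicate n k) d) : d = List.replicate n k := by
  rcases h with ⟨i, rfl⟩ | ⟨i, rfl⟩ <;> simp [List.rotate_replicate]

section TwoMonomial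

variable {N : ℕ}

lemma genMat_two_pow (n : ℕ) :
    genMat (2 : ZMod N) ^ n = !![1 + (n : ZMod N), -n; n, 1 - n] := by
  induction n with
  | zero => simp [Matrix.one_fin_two]
  | succ n ih =>
    rw [pow_succ, ih, genMat, Matrix.mul_fin_two]
    ext i j
    fin_cases i <;> fin_cases j <;> simp <;> ring

lemma isSolutionE_replicate_two_iff (h2 : (2 : ZMod N) ≠ 0) (n : ℕ) :
    IsSolutionE (List.replicate n (2 : ZMod N)) ↔ (n : ZMod N) = 0 := by
  rw [IsSolutionE, Mword.replicate, genMat_two_pow]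
  refine ⟨?_, fun hn => Or.inl (by simp [hn, Matrix.one_fin_two])⟩
  rintro (h | h)
  · simpa using congrFun (congrFun h 1) 0
  · have hn : (n : ZMod N) = 0 := by simpa using congrFun (congrFun h 1) 0
    have h00 : 1 + (n : ZMod N) = -1 := by simpa using congrFun (congrFun h 0) 0
    exact absurd (by linear_combination h00 - hn) h2

lemma monomialSize_two (hN : 3 ≤ N) : monomialSize N (2 : ZMod N) = N := by
  have h2 : ((2 : ℕ) : ZMod N) ≠ 0 := ZMod.natCast_ne_zero_of_pos_of_lt two_pos (by omega)
  have hsol : ∀ n, IsSolutionE (List.replicate n (2 : ZMod N)) ↔ N ∣ n := fun n => by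
    rw [isSolutionE_replicate_two_iff (mod_cast h2), ZMod.natCast_eq_zero_iff]
  have hmem : N ∈ {n : ℕ | 0 < n ∧ IsSolutionE (List.replicate n (2 : ZMod N))} :=
    ⟨by omega, (hsol N).2 dvd_rfl⟩
  refine le_antisymm (Nat.sInf_le hmem) (le_csInf ⟨N, hmem⟩ ?_)
  rintro n ⟨hn, hnsol⟩
  exact Nat.le_of_dvd hn ((hsol n).1 hnsol)

lemma not_isSolutionE_cons_replicate_two_append {m : ℕ} (hm : 0 < m) (hmN : m + 2 < N)
    (x y : ZMod N) : ¬ IsSolutionE (x :: (List.replicate m 2 ++ [y])) := by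
  have hentry := Mword.cons_append_singleton_one_one x y (List.replicate m (2 : ZMod N))
  rw [Mword.replicate, genMat_two_pow] at hentry
  rintro (h | h) <;> rw [h] at hentry
  · have : -(1 + (m : ZMod N)) = 1 := by simpa using hentry.symm
    exact ZMod.natCast_ne_zero_of_pos_of_lt (k := m + 2) (by omega) hmN
      (by push_cast; linear_combination -this)
  · have : -(1 + (m : ZMod N)) = -1 := by simpa using hentry.symm
    exact ZMod.natCast_ne_zero_of_pos_of_lt (N := N) hm (by omega) (by linear_combination -this)

lemma not_isReducibleE_replicate_two : ¬ IsReducibleE (List.replicate N (2 : ZMod N)) := by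
  rintro ⟨a, b, ha, hb, hbsol, hequiv⟩
  have hsum := hequiv.eq_replicate
  have hlen : a.length + b.length - 2 = N := by
    rw [← length_oplus (by omega) (by omega), hsum, List.length_replicate]
  obtain ⟨x, t, rfl⟩ := b.exists_cons_of_ne_nil (by rintro rfl; simp at hb)
  obtain rfl | ⟨l, y, rfl⟩ := t.eq_nil_or_concat'
  · simp at hb
  have hl : l = List.replicate l.length 2 := List.eq_replicate_of_mem fun z hz =>
    List.eq_of_mem_replicate (by rw [← hsum]; simp [oplus, hz])
  simp only [List.length_cons, List.length_append, List.length_nil] at hb hlen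
  rw [hl] at hbsol
  exact not_isSolutionE_cons_replicate_two_append (by omega) (by omega) x y hbsol

end TwoMonomial

/-- for `N ≥ 3`, the `2`-monomial minimal solution of `(E_N)` is
irreducible, has size `N`, and `M_N(2, …, 2) = Id` over `ZMod N`. -/
theorem stmt_9 (N : ℕ) (hN : 3 ≤ N) :
    IsIrreducibleE (monoSol N (2 : ZMod N)) ∧ monomialSize N (2 : ZMod N) = N ∧
      Mword (List.replicate N (2 : ZMod N)) = 1 := by
  have hsize := monomialSize_two hN
  have hone : Mword (List.replicate N (2 : ZMod N)) = 1 := by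
    simp [Mword.replicate, genMat_two_pow, Matrix.one_fin_two]
  rw [monoSol, hsize]
  exact ⟨⟨Or.inl hone, by simpa using hN, not_isReducibleE_replicate_two⟩, rfl, hone⟩
end
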